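/- Let n ≥ 1 and let u, v be independent random vectors each distributed as the standard n-dimensional Gaussian N(0, I_n). Define ψ(x, y) = (xᵀy)²/n − (xᵀx)(yᵀy)/n². Then E[ψ(u, v)²] = 2(n−1)(n+2)/n². -/

import Mathlib

open MeasureTheory ProbabilityTheory Filter

noncomputable def stdGaussian (n : ℕ) : Measure (Fin n → ℝ) :=
  Measure.pi fun _ => gaussianReal 0 1

noncomputable def psi (n : ℕ) (x y : Fin n → ℝ) : ℝ :=
  (∑ i, x i * y i) ^ 2 / n - ((∑ i, x i * x i) * (∑ i, y i * y i)) / n ^ 2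

/-!
Work in a Euclidean space `E` of dimension `n` with its standard Gaussian measure and integrate
first in `y` for fixed `x`. Each functional `⟪a, ·⟫` is distributed as `N(0, ‖a‖²)`, so
`E ⟪a, g⟫⁴ = 3‖a‖⁴`, and polarization gives `E ⟪a, g⟫²⟪b, g⟫² = ‖a‖²‖b‖² + 2⟪a, b⟫²`.
Summing over an orthonormal basis yields `E ⟪a, g⟫²‖g‖² = (n + 2)‖a‖²` and `E ‖g‖⁴ = n(n + 2)`.
Hence `E_y ψ(x, y)² = 2(n - 1)‖x‖⁴ / n³`, and integrating in `x` gives `2(n - 1)(n + 2) / n²`.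
The fourth moment `3v²` of `N(0, v)` comes from comparing `X + Y` with `√2 X` for independent
`X, Y ~ N(0, v)`.
-/

open scoped NNReal RealInnerProductSpace
open Module

section InnerProductSpace

variable {E : Type*} [NormedAddCommGroup E] [InnerProductSpace ℝ E]

lemma inner_sq_mul_inner_sq_eq (a b g : E) :
    ⟪a, g⟫ ^ 2 * ⟪b, g⟫ ^ 2 =
      (⟪a + b, g⟫ ^ 4 + ⟪a - b, g⟫ ^ 4 - 2 * ⟪a, g⟫ ^ 4 - 2 * ⟪b, g⟫ ^ 4) / 12 := by
  rw [inner_add_left, inner_sub_left]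
  ring

noncomputable def innerPsi (x y : E) : ℝ :=
  ⟪x, y⟫ ^ 2 / finrank ℝ E - ‖x‖ ^ 2 * ‖y‖ ^ 2 / finrank ℝ E ^ 2

lemma innerPsi_sq (x y : E) :
    innerPsi x y ^ 2 = ⟪x, y⟫ ^ 4 / finrank ℝ E ^ 2
      - 2 * ‖x‖ ^ 2 / finrank ℝ E ^ 3 * (⟪x, y⟫ ^ 2 * ‖y‖ ^ 2)
      + ‖x‖ ^ 4 / finrank ℝ E ^ 4 * ‖y‖ ^ 4 := by
  rw [innerPsi]
  ring

end InnerProductSpace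

namespace ProbabilityTheory

lemma integrable_pow_gaussianReal (m : ℝ) (v : ℝ≥0) (k : ℕ) :
    Integrable (fun x ↦ x ^ k) (gaussianReal m v) :=
  integrable_pow_of_mem_interior_integrableExpSet (X := fun x ↦ x) (by simp) k

lemma integral_sq_gaussianReal_zero_mean (v : ℝ≥0) : ∫ x, x ^ 2 ∂gaussianReal 0 v = v := by
  have h := variance_fun_id_gaussianReal (μ := 0) (v := v)
  rw [variance_eq_integral measurable_id'.aemeasurable] at h
  simpa using h

lemma integral_pow_four_gaussianReal_zero_mean (v : ℝ≥0) :
    ∫ x, x ^ 4 ∂gaussianReal 0 v = 3 * (v : ℝ) ^ 2 := by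
  set m := ∫ x, x ^ 4 ∂gaussianReal 0 v
  have hscale : ∫ x, x ^ 4 ∂gaussianReal 0 (2 * v) = 4 * m := by
    have h2 : gaussianReal 0 (2 * v) = (gaussianReal 0 v).map (√2 * ·) := by
      rw [gaussianReal_map_const_mul, mul_zero]
      congr
      ext
      simp
    rw [h2, integral_map (by fun_prop) (by fun_prop)]
    simp_rw [mul_pow]
    rw [integral_const_mul, show √2 ^ 4 = (√2 ^ 2) ^ 2 by ring, Real.sq_sqrt zero_le_two]
    norm_num [m]
  have hsum : ∫ x, x ^ 4 ∂gaussianReal 0 (2 * v) = 2 * m + 6 * (v : ℝ) ^ 2 := by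
    rw [two_mul, ← add_zero (0 : ℝ), ← gaussianReal_conv_gaussianReal, Measure.conv,
      integral_map (by fun_prop) (by fun_prop)]
    simp_rw [add_pow]
    rw [integral_finsetSum _ fun k _ ↦ ((integrable_pow_gaussianReal 0 v k).mul_prod
      (integrable_pow_gaussianReal 0 v _)).mul_const _]
    rw [Finset.sum_congr rfl fun k _ ↦ by
      rw [integral_mul_const, integral_prod_mul (fun x ↦ x ^ k) (fun y ↦ y ^ (4 - k))]]
    simp only [Finset.sum_range_succ, Finset.range_one, Finset.sum_singleton, pow_zero, pow_one,
      integral_const, probReal_univ, smul_eq_mul, mul_one, one_mul, mul_zero, zero_mul, add_zero,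
      tsub_zero, tsub_self, Nat.reduceAdd, Nat.reduceSub, Nat.choose, Nat.cast_one, Nat.cast_ofNat,
      integral_id_gaussianReal, integral_sq_gaussianReal_zero_mean, m]
    ring
  linarith

section stdGaussian

variable {E : Type*} [NormedAddCommGroup E] [InnerProductSpace ℝ E] [FiniteDimensional ℝ E]
  [MeasurableSpace E] [BorelSpace E]

lemma map_inner_stdGaussian (a : E) :
    (stdGaussian E).map (fun g ↦ ⟪a, g⟫) = gaussianReal 0 (‖a‖₊ ^ 2) := by
  let L : StrongDual ℝ E := innerSL ℝ a
  change (stdGaussian E).map L = _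
  rw [IsGaussian.eq_gaussianReal ((stdGaussian E).map L) inferInstance,
    integral_map (by fun_prop) (by fun_prop), variance_map (by fun_prop) (by fun_prop)]
  simp only [id_eq, Function.id_comp]
  rw [integral_strongDual_stdGaussian, variance_dual_stdGaussian, innerSL_apply_norm,
    ← coe_nnnorm, ← NNReal.coe_pow, Real.toNNReal_coe]

@[fun_prop]
lemma integrable_inner_pow_stdGaussian (a : E) (k : ℕ) :
    Integrable (fun g ↦ ⟪a, g⟫ ^ k) (stdGaussian E) := by
  have h := integrable_pow_gaussianReal 0 (‖a‖₊ ^ 2) k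
  rwa [← map_inner_stdGaussian, integrable_map_measure (by fun_prop) (by fun_prop)] at h

@[fun_prop]
lemma integrable_norm_pow_four_stdGaussian :
    Integrable (fun g : E ↦ ‖g‖ ^ 4) (stdGaussian E) :=
  (IsGaussian.memLp_id _ 4 (by simp)).integrable_norm_pow'

lemma integral_inner_pow_four_stdGaussian (a : E) :
    ∫ g, ⟪a, g⟫ ^ 4 ∂stdGaussian E = 3 * ‖a‖ ^ 4 := by
  rw [← integral_map (f := fun x ↦ x ^ 4) (by fun_prop) (by fun_prop), map_inner_stdGaussian,
    integral_pow_four_gaussianReal_zero_mean]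
  simp only [NNReal.coe_pow, coe_nnnorm]
  ring

@[fun_prop]
lemma integrable_inner_sq_mul_inner_sq_stdGaussian (a b : E) :
    Integrable (fun g ↦ ⟪a, g⟫ ^ 2 * ⟪b, g⟫ ^ 2) (stdGaussian E) := by
  simp_rw [inner_sq_mul_inner_sq_eq a b]
  fun_prop

lemma integral_inner_sq_mul_inner_sq_stdGaussian (a b : E) :
    ∫ g, ⟪a, g⟫ ^ 2 * ⟪b, g⟫ ^ 2 ∂stdGaussian E = ‖a‖ ^ 2 * ‖b‖ ^ 2 + 2 * ⟪a, b⟫ ^ 2 := by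
  simp_rw [inner_sq_mul_inner_sq_eq a b]
  rw [integral_div, integral_sub, integral_sub, integral_add, integral_const_mul,
    integral_const_mul]
  all_goals try fun_prop
  simp only [integral_inner_pow_four_stdGaussian]
  have h4 (x : E) : ‖x‖ ^ 4 = (‖x‖ ^ 2) ^ 2 := by ring
  rw [h4 (a + b), h4 (a - b), norm_add_sq_real, norm_sub_sq_real]
  ring

@[fun_prop]
lemma integrable_inner_sq_mul_norm_sq_stdGaussian (a : E) :
    Integrable (fun g ↦ ⟪a, g⟫ ^ 2 * ‖g‖ ^ 2) (stdGaussian E) := by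
  simp_rw [← (stdOrthonormalBasis ℝ E).sum_sq_inner_right, Finset.mul_sum]
  fun_prop

lemma integral_inner_sq_mul_norm_sq_stdGaussian (a : E) :
    ∫ g, ⟪a, g⟫ ^ 2 * ‖g‖ ^ 2 ∂stdGaussian E = (finrank ℝ E + 2) * ‖a‖ ^ 2 := by
  let b := stdOrthonormalBasis ℝ E
  have h (g : E) : ⟪a, g⟫ ^ 2 * ‖g‖ ^ 2 = ∑ i, ⟪a, g⟫ ^ 2 * ⟪b i, g⟫ ^ 2 := by
    rw [← Finset.mul_sum, b.sum_sq_inner_right]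
  simp_rw [h]
  rw [integral_finsetSum _ fun i _ ↦ by fun_prop]
  simp_rw [integral_inner_sq_mul_inner_sq_stdGaussian, b.norm_eq_one, Finset.sum_add_distrib,
    ← Finset.mul_sum, b.sum_sq_inner_left]
  simp only [one_pow, Finset.sum_const, Finset.card_univ, Fintype.card_fin, nsmul_eq_mul, mul_one]
  ring

lemma integral_norm_pow_four_stdGaussian :
    ∫ g, ‖g‖ ^ 4 ∂stdGaussian E = finrank ℝ E * (finrank ℝ E + 2) := by
  let b := stdOrthonormalBasis ℝ E
  have h (g : E) : ‖g‖ ^ 4 = ∑ i, ⟪b i, g⟫ ^ 2 * ‖g‖ ^ 2 := by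
    rw [← Finset.sum_mul, b.sum_sq_inner_right]
    ring
  simp_rw [h]
  rw [integral_finsetSum _ fun i _ ↦ by fun_prop]
  simp only [integral_inner_sq_mul_norm_sq_stdGaussian, b.norm_eq_one, one_pow, mul_one,
    Finset.sum_const, Finset.card_univ, Fintype.card_fin, nsmul_eq_mul]

lemma integrable_innerPsi_sq_right (x : E) :
    Integrable (fun y ↦ innerPsi x y ^ 2) (stdGaussian E) := by
  simp_rw [innerPsi_sq]
  fun_prop

lemma integral_innerPsi_sq_right (x : E) :
    ∫ y, innerPsi x y ^ 2 ∂stdGaussian E = 2 * (finrank ℝ E - 1) / finrank ℝ E ^ 3 * ‖x‖ ^ 4 := by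
  simp_rw [innerPsi_sq]
  rw [integral_add (by fun_prop) (by fun_prop), integral_sub (by fun_prop) (by fun_prop),
    integral_div, integral_const_mul, integral_const_mul, integral_inner_pow_four_stdGaussian,
    integral_inner_sq_mul_norm_sq_stdGaussian, integral_norm_pow_four_stdGaussian]
  rcases eq_or_ne (finrank ℝ E : ℝ) 0 with h | h
  · simp [h]
  · field_simp
    ring

lemma integral_innerPsi_sq :
    ∫ p, innerPsi p.1 p.2 ^ 2 ∂(stdGaussian E).prod (stdGaussian E)
      = 2 * (finrank ℝ E - 1) * (finrank ℝ E + 2) / finrank ℝ E ^ 2 := by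
  have hint : Integrable (fun p : E × E ↦ innerPsi p.1 p.2 ^ 2)
      ((stdGaussian E).prod (stdGaussian E)) := by
    rw [integrable_prod_iff (by unfold innerPsi; fun_prop)]
    refine ⟨ae_of_all _ integrable_innerPsi_sq_right, ?_⟩
    simp_rw [norm_pow, Real.norm_eq_abs, sq_abs, integral_innerPsi_sq_right]
    fun_prop
  rw [integral_prod _ hint]
  simp_rw [integral_innerPsi_sq_right]
  rw [integral_const_mul, integral_norm_pow_four_stdGaussian]
  rcases eq_or_ne (finrank ℝ E : ℝ) 0 with h | h
  · simp [h]
  · field_simp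

end stdGaussian

end ProbabilityTheory

lemma stdGaussian_eq_map_ofLp (n : ℕ) :
    stdGaussian n = (ProbabilityTheory.stdGaussian (EuclideanSpace ℝ (Fin n))).map WithLp.ofLp := by
  rw [← map_pi_eq_stdGaussian, Measure.map_map (by fun_prop) (by fun_prop)]
  simp [Function.comp_def, _root_.stdGaussian]

lemma psi_ofLp {n : ℕ} (x y : EuclideanSpace ℝ (Fin n)) :
    psi n x.ofLp y.ofLp = innerPsi x y := by
  rw [psi, innerPsi, EuclideanSpace.real_norm_sq_eq, EuclideanSpace.real_norm_sq_eq,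
    finrank_euclideanSpace_fin, EuclideanSpace.inner_eq_star_dotProduct]
  simp [dotProduct, pow_two, mul_comm]

lemma continuous_psi_sq (n : ℕ) :
    Continuous fun p : (Fin n → ℝ) × (Fin n → ℝ) ↦ psi n p.1 p.2 ^ 2 := by
  unfold psi
  fun_prop

theorem expectation_psi_sq_general {Ω : Type*} [MeasurableSpace Ω] (μ : Measure Ω)
    [IsProbabilityMeasure μ]
    (n : ℕ) (u v : Ω → (Fin n → ℝ))
    (hu : Measurable u) (hv : Measurable v)
    (hindep : IndepFun u v μ)
    (hud : Measure.map u μ = stdGaussian n)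
    (hvd : Measure.map v μ = stdGaussian n) :
    ∫ ω, (psi n (u ω) (v ω)) ^ 2 ∂μ = 2 * ((n : ℝ) - 1) * ((n : ℝ) + 2) / n ^ 2 := by
  have hmap : μ.map (fun ω ↦ (u ω, v ω)) = (stdGaussian n).prod (stdGaussian n) := by
    rw [(indepFun_iff_map_prod_eq_prod_map_map hu.aemeasurable hv.aemeasurable).mp hindep,
      hud, hvd]
  calc ∫ ω, psi n (u ω) (v ω) ^ 2 ∂μ
      = ∫ p, psi n p.1 p.2 ^ 2 ∂μ.map (fun ω ↦ (u ω, v ω)) :=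
        (integral_map (hu.prodMk hv).aemeasurable (continuous_psi_sq n).aestronglyMeasurable).symm
    _ = ∫ p, innerPsi p.1 p.2 ^ 2 ∂(ProbabilityTheory.stdGaussian (EuclideanSpace ℝ (Fin n))).prod
          (ProbabilityTheory.stdGaussian (EuclideanSpace ℝ (Fin n))) := by
      rw [hmap, stdGaussian_eq_map_ofLp, Measure.map_prod_map _ _ (by fun_prop) (by fun_prop),
        integral_map (by fun_prop) (continuous_psi_sq n).aestronglyMeasurable]
      simp only [Prod.map, psi_ofLp]
    _ = 2 * ((n : ℝ) - 1) * ((n : ℝ) + 2) / n ^ 2 := by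
      rw [integral_innerPsi_sq, finrank_euclideanSpace_fin]

/-- If `u, v` are independent standard `n`-dimensional Gaussian vectors, then
`E[ψ(u, v)²] = 2(n−1)(n+2)/n²`. -/
theorem expectation_psi_sq {Ω : Type*} [MeasurableSpace Ω] (μ : Measure Ω)
    [IsProbabilityMeasure μ]
    (n : ℕ) (hn : 1 ≤ n) (u v : Ω → (Fin n → ℝ))
    (hu : Measurable u) (hv : Measurable v)
    (hindep : IndepFun u v μ)
    (hud : Measure.map u μ = stdGaussian n)
    (hvd : Measure.map v μ = stdGaussian n) :
    ∫ ω, (psi n (u ω) (v ω)) ^ 2 ∂μ = 2 * ((n : ℝ) - 1) * ((n : ℝ) + 2) / n ^ 2 :=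
  expectation_psi_sq_general μ n u v hu hv hindep hud hvd
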